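/- Let n ≥ 0, let σ_1,…,σ_{n+1} ∈ Σ_{r^m}* be words and L_1,…,L_n ⊆ Σ_{r^m}* be languages, and let L = σ_{n+1}·L_n*·σ_n⋯L_1*·σ_1 (the concatenation, read left to right, of σ_{n+1}, the Kleene star of L_n, σ_n, …, the Kleene star of L_1, and σ_1). Then cl(conv(ξ(L))) = cl(conv( ξ({σ_{n+1}⋯σ_1}) ∪ ⋃_{i=1}^n Γ_{σ_i⋯σ_1}^{-1}( cl(conv(ξ(L_i))) ) )), where σ_j⋯σ_1 denotes the concatenated word σ_j·σ_{j−1}⋯σ_1 and ξ({σ_{n+1}⋯σ_1}) is the singleton {ξ(σ_{n+1}⋯σ_1)} if the word σ_{n+1}⋯σ_1 is nonempty and ∅ otherwise. -/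

import Mathlib

/-- The alphabet `Σ_{r^m}` of digit vectors. -/
abbrev Alpha (r m : ℕ) := Fin m → Fin r
abbrev Word (r m : ℕ) := List (Alpha r m)

/-- `ρ(b₁⋯bₙ) = Σᵢ r^(i-1)·bᵢ` (least significant digit first), viewed in `ℝ^m`. -/
noncomputable def rho (r m : ℕ) : Word r m → (Fin m → ℝ)
  | [] => 0
  | b :: w => (fun j => (b j : ℝ)) + (r : ℝ) • rho r m w

/-- `Γ_σ(x) = r^|σ|·x + ρ(σ)`. -/
noncomputable def Gam (r m : ℕ) (σ : Word r m) (x : Fin m → ℝ) : Fin m → ℝ :=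
  (r : ℝ) ^ σ.length • x + rho r m σ

/-- The inverse bijection `Γ_σ⁻¹(y) = (y - ρ(σ))/r^|σ|`. -/
noncomputable def GamInv (r m : ℕ) (σ : Word r m) (y : Fin m → ℝ) : Fin m → ℝ :=
  ((r : ℝ) ^ σ.length)⁻¹ • (y - rho r m σ)

/-- `ξ(σ) = ρ(σ)/(1 - r^|σ|)` (meaningful for nonempty `σ`). -/
noncomputable def xi (r m : ℕ) (σ : Word r m) : Fin m → ℝ :=
  (1 - (r : ℝ) ^ σ.length)⁻¹ • rho r m σ

/-- `ρ(L) = {ρ(σ) : σ ∈ L}`. -/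
def rhoSet (r m : ℕ) (L : Set (Word r m)) : Set (Fin m → ℝ) :=
  {x | ∃ σ ∈ L, x = rho r m σ}

/-- `ξ(L) = {ξ(σ) : σ ∈ L, σ ≠ ε}`. -/
def xiSet (r m : ℕ) (L : Set (Word r m)) : Set (Fin m → ℝ) :=
  {x | ∃ σ ∈ L, σ ≠ [] ∧ x = xi r m σ}

/-- Kleene star of a language. -/
def kstar' {α : Type*} (L : Set (List α)) : Set (List α) :=
  {w | ∃ ws : List (List α), (∀ u ∈ ws, u ∈ L) ∧ w = ws.flatten}

/-- Concatenation of two languages. -/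
def catL {α : Type*} (A B : Set (List α)) : Set (List α) :=
  {w | ∃ a ∈ A, ∃ b ∈ B, w = a ++ b}

/-- `chainLang σ Ls n = σ_{n+1}·(L_n)*·σ_n ⋯ (L_1)*·σ_1`. -/
def chainLang {α : Type*} (σ : ℕ → List α) (Ls : ℕ → Set (List α)) : ℕ → Set (List α)
  | 0 => {σ 1}
  | n + 1 => catL {σ (n + 2)} (catL (kstar' (Ls (n + 1))) (chainLang σ Ls n))

/-- `catDown σ hi lo = σ_hi·σ_{hi-1}⋯σ_lo` (empty if `lo > hi`). -/
def catDown {α : Type*} (σ : ℕ → List α) (hi lo : ℕ) : List α :=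
  ((List.range (hi + 1 - lo)).map fun j => σ (hi - j)).flatten

/-- `catUp σ k = σ_1·σ_2⋯σ_k`. -/
def catUp {α : Type*} (σ : ℕ → List α) (k : ℕ) : List α :=
  ((List.range k).map fun j => σ (j + 1)).flatten

/-- `σ^k`, the `k`-fold concatenation of `σ`. -/
def repK {α : Type*} (σ : List α) (k : ℕ) : List α := (List.replicate k σ).flatten

/-- `ℝ₋·X = {t·x : t ≤ 0, x ∈ X}`. -/
def negSmul {m : ℕ} (X : Set (Fin m → ℝ)) : Set (Fin m → ℝ) :=
  {y | ∃ t : ℝ, t ≤ 0 ∧ ∃ x ∈ X, y = t • x}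

/-- The cone `C(R)` generated by a finite set of rays. -/
def coneOf {m : ℕ} (R : Finset ((Fin m → ℝ) × ℝ)) : Set ((Fin m → ℝ) × ℝ) :=
  {y | ∃ t : ((Fin m → ℝ) × ℝ) → ℝ, (∀ p, 0 ≤ t p) ∧ y = ∑ p ∈ R, t p • p}

/-- The polyhedral convex set `P(R) = {x : (x,1) ∈ C(R)}`. -/
def polyOf {m : ℕ} (R : Finset ((Fin m → ℝ) × ℝ)) : Set (Fin m → ℝ) :=
  {x | (x, (1 : ℝ)) ∈ coneOf R}

/-!
`ξ(w)` is the unique fixed point of the expanding affine map `Γ_w`, and `Γ_{ab} = Γ_a ∘ Γ_b`;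
hence `Γ_b (ξ(ab)) = ξ(ba)`. Moreover `ξ(ab)` lies on the segment `[ξ(a), ξ(b)]` with a weight
on `ξ(a)` that tends to `0` as `|b| → ∞`, so `ξ(p uᵏ) → ξ(u)`.

For a single star, `ξ(a v y) = Γ_y⁻¹ (ξ(y a v))` lies between `ξ(a y)` and `Γ_y⁻¹ (ξ(v))`, and
`ξ(v) ∈ conv ξ(L)` for `v ∈ L*`; conversely `Γ_y⁻¹ (ξ(u)) = lim ξ(a uᵏ y)`. This gives
`cl conv ξ(A L* y) = cl conv (ξ(A y) ∪ Γ_y⁻¹ (cl conv ξ(L)))` for any nonempty `A`. The chain is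
then unfolded from the top, each star being absorbed into the prefix language `A`.
-/

open Filter Topology

section Arithmetic

variable {r m : ℕ}

lemma rho_append (a b : Word r m) :
    rho r m (a ++ b) = rho r m a + (r : ℝ) ^ a.length • rho r m b := by
  induction a with
  | nil => simp [rho]
  | cons x a ih =>
    simp only [List.cons_append, rho, ih, List.length_cons, pow_succ, smul_add, mul_comm,
      mul_smul]
    abel

lemma Gam_nil (x : Fin m → ℝ) : Gam r m [] x = x := by
  simp [Gam, rho]

lemma Gam_append (a b : Word r m) (x : Fin m → ℝ) :
    Gam r m (a ++ b) x = Gam r m a (Gam r m b x) := by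
  simp only [Gam, rho_append, List.length_append, pow_add, smul_add, mul_smul]
  abel

lemma one_lt_pow_length (hr : 1 < r) {w : Word r m} (hw : w ≠ []) : 1 < (r : ℝ) ^ w.length :=
  one_lt_pow₀ (by exact_mod_cast hr) (by simpa using hw)

lemma one_le_pow_length (hr : 1 < r) (w : Word r m) : 1 ≤ (r : ℝ) ^ w.length :=
  one_le_pow₀ (by exact_mod_cast hr.le)

lemma one_sub_pow_length_smul_xi (hr : 1 < r) (w : Word r m) :
    (1 - (r : ℝ) ^ w.length) • xi r m w = rho r m w := by
  rcases eq_or_ne w [] with rfl | hw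
  · simp [rho]
  · rw [xi, smul_inv_smul₀ (sub_ne_zero.2 (one_lt_pow_length hr hw).ne)]

lemma Gam_xi (hr : 1 < r) (w : Word r m) : Gam r m w (xi r m w) = xi r m w := by
  rw [Gam, ← one_sub_pow_length_smul_xi hr w]
  module

lemma eq_xi_of_Gam_eq_self (hr : 1 < r) {w : Word r m} (hw : w ≠ []) {x : Fin m → ℝ}
    (hx : Gam r m w x = x) : x = xi r m w := by
  have hρ : rho r m w = (1 - (r : ℝ) ^ w.length) • x := by
    rw [Gam] at hx
    linear_combination (norm := module) hx
  rw [xi, hρ, inv_smul_smul₀ (sub_ne_zero.2 (one_lt_pow_length hr hw).ne)]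

lemma Gam_xi_append (hr : 1 < r) (a b : Word r m) :
    Gam r m b (xi r m (a ++ b)) = xi r m (b ++ a) := by
  rcases eq_or_ne (b ++ a) [] with hba | hba
  · obtain ⟨rfl, rfl⟩ := List.append_eq_nil_iff.1 hba
    exact Gam_nil _
  · refine eq_xi_of_Gam_eq_self hr hba ?_
    rw [Gam_append, ← Gam_append a b, Gam_xi hr]

lemma GamInv_Gam (hr : r ≠ 0) (w : Word r m) (x : Fin m → ℝ) :
    GamInv r m w (Gam r m w x) = x := by
  rw [GamInv, Gam, add_sub_cancel_right, inv_smul_smul₀ (pow_ne_zero _ (by exact_mod_cast hr))]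

lemma Gam_GamInv (hr : r ≠ 0) (w : Word r m) (y : Fin m → ℝ) :
    Gam r m w (GamInv r m w y) = y := by
  rw [GamInv, Gam, smul_inv_smul₀ (pow_ne_zero _ (by exact_mod_cast hr)), sub_add_cancel]

lemma xi_append_eq_GamInv (hr : 1 < r) (a b : Word r m) :
    xi r m (a ++ b) = GamInv r m b (xi r m (b ++ a)) := by
  rw [← Gam_xi_append hr a b, GamInv_Gam (by omega)]

lemma xi_repK_succ (hr : 1 < r) {u : Word r m} (hu : u ≠ []) (k : ℕ) :
    xi r m (repK u (k + 1)) = xi r m u := by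
  refine eq_xi_of_Gam_eq_self hr hu ?_
  have hcomm : repK u k ++ u = u ++ repK u k := by
    simp [repK, ← List.flatten_concat, ← List.replicate_succ', List.replicate_succ]
  rw [repK, List.replicate_succ', List.flatten_concat, ← repK]
  nth_rewrite 2 [hcomm]
  exact Gam_xi_append hr _ _

end Arithmetic

section Convexity

variable {r m : ℕ}

lemma xi_append_eq_lineMap (hr : 1 < r) {a b : Word r m} (hab : a ++ b ≠ []) :
    xi r m (a ++ b) = AffineMap.lineMap (xi r m b) (xi r m a)
      ((1 - (r : ℝ) ^ a.length) / (1 - (r : ℝ) ^ a.length * (r : ℝ) ^ b.length)) := by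
  have hD : 1 - (r : ℝ) ^ a.length * (r : ℝ) ^ b.length ≠ 0 := by
    rw [← pow_add, ← List.length_append]
    exact sub_ne_zero.2 (one_lt_pow_length hr hab).ne
  have hρ := one_sub_pow_length_smul_xi hr (a ++ b)
  rw [rho_append, ← one_sub_pow_length_smul_xi hr a, ← one_sub_pow_length_smul_xi hr b,
    List.length_append, pow_add, smul_smul] at hρ
  rw [← inv_smul_smul₀ hD (xi r m (a ++ b)), hρ, AffineMap.lineMap_apply_module]
  match_scalars
  · field_simp
  · field_simp
    ring

lemma xi_append_mem_segment (hr : 1 < r) (a b : Word r m) :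
    xi r m (a ++ b) ∈ segment ℝ (xi r m a) (xi r m b) := by
  rcases eq_or_ne (a ++ b) [] with hab | hab
  · obtain ⟨rfl, rfl⟩ := List.append_eq_nil_iff.1 hab
    exact left_mem_segment ℝ _ _
  have hA := one_le_pow_length hr a
  have hB := one_le_pow_length hr b
  have hAB : 1 < (r : ℝ) ^ a.length * (r : ℝ) ^ b.length := by
    rw [← pow_add, ← List.length_append]
    exact one_lt_pow_length hr hab
  rw [segment_symm, segment_eq_image_lineMap, xi_append_eq_lineMap hr hab]
  refine ⟨_, ⟨div_nonneg_of_nonpos (by linarith) (by linarith), ?_⟩, rfl⟩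
  rw [div_le_one_of_neg (by linarith)]
  nlinarith

lemma xi_append_mem_of_convex (hr : 1 < r) {C : Set (Fin m → ℝ)} (hC : Convex ℝ C)
    {a b : Word r m} (ha : a ≠ [] → xi r m a ∈ C) (hb : b ≠ [] → xi r m b ∈ C)
    (hab : a ++ b ≠ []) : xi r m (a ++ b) ∈ C := by
  rcases eq_or_ne a [] with rfl | ha'
  · exact hb (by simpa using hab)
  rcases eq_or_ne b [] with rfl | hb'
  · simpa using ha ha'
  exact hC.segment_subset (ha ha') (hb hb') (xi_append_mem_segment hr a b)

lemma xi_mem_convexHull_of_mem_kstar' (hr : 1 < r) {L : Set (Word r m)} {v : Word r m}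
    (hv : v ∈ kstar' L) (hne : v ≠ []) : xi r m v ∈ convexHull ℝ (xiSet r m L) := by
  obtain ⟨ws, hws, rfl⟩ := hv
  induction ws with
  | nil => exact absurd rfl hne
  | cons u ws ih =>
    rw [List.flatten_cons] at hne ⊢
    exact xi_append_mem_of_convex hr (convex_convexHull ℝ _)
      (fun hu => subset_convexHull ℝ _ ⟨u, hws u List.mem_cons_self, hu, rfl⟩)
      (ih fun v hv => hws v (List.mem_cons_of_mem u hv)) hne

lemma tendsto_xi_append_repK (hr : 1 < r) {u : Word r m} (hu : u ≠ []) (p : Word r m) :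
    Tendsto (fun k => xi r m (p ++ repK u (k + 1))) atTop (𝓝 (xi r m u)) := by
  have hrep : ∀ k, p ++ repK u (k + 1) ≠ [] := fun k => by simp [repK, hu]
  simp_rw [xi_append_eq_lineMap hr (hrep _), xi_repK_succ hr hu]
  conv => arg 3; rw [← AffineMap.lineMap_apply_zero (xi r m u) (xi r m p) (k := ℝ)]
  refine (AffineMap.lineMap_continuous.tendsto _).comp (tendsto_const_nhds.div_atBot ?_)
  have hlen : ∀ k, (repK u (k + 1)).length = u.length * (k + 1) := fun k => by
    simp [repK, mul_comm]
  simp_rw [hlen, pow_mul]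
  have hpow : Tendsto (fun k : ℕ => ((r : ℝ) ^ u.length) ^ (k + 1)) atTop atTop :=
    (tendsto_pow_atTop_atTop_of_one_lt (one_lt_pow_length hr hu)).comp (tendsto_add_atTop_nat 1)
  exact tendsto_atBot_add_const_left _ 1
    (tendsto_neg_atTop_atBot.comp (hpow.const_mul_atTop (by positivity)))

end Convexity

section AffineStructure

variable {r m : ℕ}

noncomputable def gamInvAffineMap (w : Word r m) : (Fin m → ℝ) →ᵃ[ℝ] (Fin m → ℝ) where
  toFun := GamInv r m w
  linear := ((r : ℝ) ^ w.length)⁻¹ • LinearMap.id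
  map_vadd' x v := by
    simp only [GamInv, vadd_eq_add, LinearMap.smul_apply, LinearMap.id_apply, smul_sub, smul_add]
    abel

lemma convex_GamInv_preimage (w : Word r m) {C : Set (Fin m → ℝ)} (hC : Convex ℝ C) :
    Convex ℝ (GamInv r m w ⁻¹' C) :=
  hC.affine_preimage (gamInvAffineMap w)

lemma continuous_GamInv (w : Word r m) : Continuous (GamInv r m w) :=
  (gamInvAffineMap w).continuous_of_finiteDimensional

end AffineStructure

section Languages

variable {α : Type*}

lemma catL_assoc (A B C : Set (List α)) : catL (catL A B) C = catL A (catL B C) := by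
  ext w
  constructor
  · rintro ⟨_, ⟨a, ha, b, hb, rfl⟩, c, hc, rfl⟩
    exact ⟨a, ha, b ++ c, ⟨b, hb, c, hc, rfl⟩, List.append_assoc a b c⟩
  · rintro ⟨a, ha, _, ⟨b, hb, c, hc, rfl⟩, rfl⟩
    exact ⟨a ++ b, ⟨a, ha, b, hb, rfl⟩, c, hc, (List.append_assoc a b c).symm⟩

lemma catL_singleton_singleton (a b : List α) : catL {a} {b} = {a ++ b} := by
  ext w
  simp [catL, eq_comm]

lemma catL_singleton_nil_left (L : Set (List α)) : catL {[]} L = L := by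
  ext w
  simp [catL]

lemma Set.Nonempty.catL {A B : Set (List α)} (hA : A.Nonempty) (hB : B.Nonempty) :
    (catL A B).Nonempty :=
  let ⟨a, ha⟩ := hA
  let ⟨b, hb⟩ := hB
  ⟨a ++ b, a, ha, b, hb, rfl⟩

lemma nil_mem_kstar' (L : Set (List α)) : [] ∈ kstar' L :=
  ⟨[], by simp, rfl⟩

lemma repK_mem_kstar' {L : Set (List α)} {u : List α} (hu : u ∈ L) (k : ℕ) :
    repK u k ∈ kstar' L :=
  ⟨List.replicate k u, fun _ hv => List.eq_of_mem_replicate hv ▸ hu, rfl⟩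

lemma catDown_self (σ : ℕ → List α) (k : ℕ) : catDown σ k k = σ k := by
  simp [catDown]

lemma catDown_succ (σ : ℕ → List α) {hi lo : ℕ} (h : lo ≤ hi + 1) :
    catDown σ (hi + 1) lo = σ (hi + 1) ++ catDown σ hi lo := by
  rw [catDown, show hi + 1 + 1 - lo = hi + 1 - lo + 1 by omega, List.range_succ_eq_map]
  simp only [List.map_cons, List.map_map, List.flatten_cons, Nat.sub_zero, catDown]
  congr 2
  exact List.map_congr_left fun j _ => by simp [show hi + 1 - (j + 1) = hi - j by omega]

end Languages

lemma closedConvexHull_closedConvexHull_union {𝕜 E : Type*} [Semiring 𝕜] [PartialOrder 𝕜]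
    [AddCommGroup E] [Module 𝕜 E] [TopologicalSpace E] (s t : Set E) :
    closedConvexHull 𝕜 (closedConvexHull 𝕜 s ∪ t) = closedConvexHull 𝕜 (s ∪ t) :=
  (closedConvexHull 𝕜).closure_sup_closure_left s t

section ClosedConvexHull

variable {r m : ℕ}

lemma xiSet_catL_kstar'_subset (hr : 1 < r) (A L : Set (Word r m)) (y : Word r m) :
    xiSet r m (catL (catL A (kstar' L)) {y}) ⊆
      closedConvexHull ℝ (xiSet r m (catL A {y}) ∪
        Gam r m y ⁻¹' closedConvexHull ℝ (xiSet r m L)) := by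
  rintro _ ⟨_, ⟨_, ⟨a, ha, v, hv, rfl⟩, _, hy, rfl⟩, hne, rfl⟩
  rw [Set.mem_singleton_iff.1 hy] at hne ⊢
  rw [xi_append_eq_GamInv hr, ← List.append_assoc]
  refine xi_append_mem_of_convex hr (convex_GamInv_preimage y convex_closedConvexHull)
    (fun hya => ?_) (fun hv' => ?_)
    (by simp only [ne_eq, List.append_eq_nil_iff] at hne ⊢; tauto)
  · rw [Set.mem_preimage, ← xi_append_eq_GamInv hr]
    exact subset_closedConvexHull
      (Or.inl ⟨a ++ y, ⟨a, ha, y, rfl, rfl⟩, by simpa [and_comm] using hya, rfl⟩)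
  · refine subset_closedConvexHull (Or.inr ?_)
    rw [Set.mem_preimage, Gam_GamInv (by omega)]
    exact convexHull_subset_closedConvexHull (xi_mem_convexHull_of_mem_kstar' hr hv hv')

lemma GamInv_xi_mem_closure_xiSet_catL_kstar' (hr : 1 < r) {A L : Set (Word r m)}
    {a u : Word r m} (ha : a ∈ A) (hu : u ∈ L) (hune : u ≠ []) (y : Word r m) :
    GamInv r m y (xi r m u) ∈ closure (xiSet r m (catL (catL A (kstar' L)) {y})) := by
  refine mem_closure_of_tendsto
    (((continuous_GamInv y).tendsto _).comp (tendsto_xi_append_repK hr hune (y ++ a)))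
    (Eventually.of_forall fun k => ?_)
  refine ⟨a ++ repK u (k + 1) ++ y,
    ⟨_, ⟨a, ha, _, repK_mem_kstar' hu _, rfl⟩, y, rfl, rfl⟩, by simp [repK, hune], ?_⟩
  rw [Function.comp_apply, xi_append_eq_GamInv hr _ y, List.append_assoc]

theorem closedConvexHull_xiSet_catL_kstar' (hr : 1 < r) {A : Set (Word r m)} (hA : A.Nonempty)
    (L : Set (Word r m)) (y : Word r m) :
    closedConvexHull ℝ (xiSet r m (catL (catL A (kstar' L)) {y})) =
      closedConvexHull ℝ (xiSet r m (catL A {y}) ∪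
        Gam r m y ⁻¹' closedConvexHull ℝ (xiSet r m L)) := by
  set C := closedConvexHull ℝ (xiSet r m (catL (catL A (kstar' L)) {y}))
  refine subset_antisymm (closedConvexHull_min (xiSet_catL_kstar'_subset hr A L y)
    convex_closedConvexHull isClosed_closedConvexHull) (closedConvexHull_min
      (Set.union_subset ?_ ?_) convex_closedConvexHull isClosed_closedConvexHull)
  · rintro _ ⟨_, ⟨a, ha, _, hy, rfl⟩, hne, rfl⟩
    rw [Set.mem_singleton_iff.1 hy] at hne ⊢
    refine subset_closedConvexHull ⟨a ++ [] ++ y, ?_, by simpa using hne, by simp⟩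
    exact ⟨a ++ [], ⟨a, ha, [], nil_mem_kstar' L, rfl⟩, y, rfl, rfl⟩
  · have hK : closedConvexHull ℝ (xiSet r m L) ⊆ GamInv r m y ⁻¹' C := by
      refine closedConvexHull_min ?_ (convex_GamInv_preimage y convex_closedConvexHull)
        (isClosed_closedConvexHull.preimage (continuous_GamInv y))
      rintro _ ⟨u, hu, hune, rfl⟩
      obtain ⟨a, ha⟩ := hA
      exact closure_subset_closedConvexHull
        (GamInv_xi_mem_closure_xiSet_catL_kstar' hr ha hu hune y)
    intro x hx
    exact GamInv_Gam (by omega) y x ▸ hK hx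

theorem closedConvexHull_xiSet_catL_chainLang (hr : 1 < r) (σ : ℕ → Word r m)
    (Ls : ℕ → Set (Word r m)) (n : ℕ) {A : Set (Word r m)} (hA : A.Nonempty) :
    closedConvexHull ℝ (xiSet r m (catL A (chainLang σ Ls n))) =
      closedConvexHull ℝ (xiSet r m (catL A {catDown σ (n + 1) 1}) ∪
        ⋃ i ∈ Finset.Icc 1 n,
          Gam r m (catDown σ i 1) ⁻¹' closedConvexHull ℝ (xiSet r m (Ls i))) := by
  induction n generalizing A with
  | zero => simp [chainLang, catDown_self]
  | succ n ih =>
    have hAσ : (catL A {σ (n + 2)}).Nonempty := hA.catL (Set.singleton_nonempty _)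
    rw [chainLang, ← catL_assoc, ← catL_assoc, ih (hAσ.catL ⟨[], nil_mem_kstar' _⟩),
      ← closedConvexHull_closedConvexHull_union, closedConvexHull_xiSet_catL_kstar' hr hAσ,
      catL_assoc, catL_singleton_singleton, ← catDown_succ σ (by omega),
      closedConvexHull_closedConvexHull_union,
      ← Finset.insert_Icc_right_eq_Icc_add_one (by omega), Finset.set_biUnion_insert,
      Set.union_assoc]

end ClosedConvexHull

theorem closure_convexHull_xiSet_chainLang_general
    (r m : ℕ) (hr : 2 ≤ r) (n : ℕ)
    (σ : ℕ → Word r m) (Ls : ℕ → Set (Word r m)) :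
    closure (convexHull ℝ (xiSet r m (chainLang σ Ls n))) =
      closure (convexHull ℝ
        (xiSet r m {catDown σ (n + 1) 1} ∪
          ⋃ i ∈ Finset.Icc 1 n,
            Gam r m (catDown σ i 1) ⁻¹'
              closure (convexHull ℝ (xiSet r m (Ls i))))) := by
  simp only [← closedConvexHull_eq_closure_convexHull]
  simpa only [catL_singleton_nil_left] using
    closedConvexHull_xiSet_catL_chainLang hr σ Ls n (Set.singleton_nonempty [])

/-- Proposition 3 of the paper. -/
theorem closure_convexHull_xiSet_chainLang
    (r m : ℕ) (hr : 2 ≤ r) (hm : 1 ≤ m) (n : ℕ)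
    (σ : ℕ → Word r m) (Ls : ℕ → Set (Word r m)) :
    closure (convexHull ℝ (xiSet r m (chainLang σ Ls n))) =
      closure (convexHull ℝ
        (xiSet r m {catDown σ (n + 1) 1} ∪
          ⋃ i ∈ Finset.Icc 1 n,
            Gam r m (catDown σ i 1) ⁻¹'
              closure (convexHull ℝ (xiSet r m (Ls i))))) :=
  closure_convexHull_xiSet_chainLang_general r m hr n σ Ls
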